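/- arXiv:2007.14363 — 2 statements merged into one kernel-verified Lean document; each statement's English description precedes it below -/
import Mathlib

section
/- For any bounded domain Ω ⊆ ℂⁿ, the squeezing function corresponding to the polydisk T_Ω : Ω → ℝ is continuous on Ω. -/
open Metric Set Matrix
open scoped ComplexOrder

noncomputable section

/-- The open polydisk of radius `r` centered at the origin in `ℂ^ι`:
`𝔻^ι(0,r) = { w : |wᵢ| < r for all i }`. -/
def polydisk (ι : Type*) [Fintype ι] (r : ℝ) : Set (EuclideanSpace ℂ ι) :=
  {w | ∀ i, ‖w i‖ < r}

/-- The squeezing function corresponding to the polydisk: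
`T_Ω(z) = sup { r > 0 : ∃ injective holomorphic f : Ω → 𝔻ⁿ, f z = 0, 𝔻ⁿ(0,r) ⊆ f(Ω) }`. -/
def squeezingT {ι : Type*} [Fintype ι] (Ω : Set (EuclideanSpace ℂ ι))
    (z : EuclideanSpace ℂ ι) : ℝ :=
  sSup {r : ℝ | 0 < r ∧ ∃ f : EuclideanSpace ℂ ι → EuclideanSpace ℂ ι,
    DifferentiableOn ℂ f Ω ∧ Set.InjOn f Ω ∧ f '' Ω ⊆ polydisk ι 1 ∧
    f z = 0 ∧ polydisk ι r ⊆ f '' Ω}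

/-- The squeezing function corresponding to the Euclidean unit ball:
`S_Ω(z) = sup { r > 0 : ∃ injective holomorphic f : Ω → Bⁿ, f z = 0, Bⁿ(0,r) ⊆ f(Ω) }`. -/
def squeezingS {ι : Type*} [Fintype ι] (Ω : Set (EuclideanSpace ℂ ι))
    (z : EuclideanSpace ℂ ι) : ℝ :=
  sSup {r : ℝ | 0 < r ∧ ∃ f : EuclideanSpace ℂ ι → EuclideanSpace ℂ ι,
    DifferentiableOn ℂ f Ω ∧ Set.InjOn f Ω ∧ f '' Ω ⊆ ball (0 : EuclideanSpace ℂ ι) 1 ∧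
    f z = 0 ∧ ball (0 : EuclideanSpace ℂ ι) r ⊆ f '' Ω}

/-- A bounded domain in `ℂ^ι`: a nonempty connected bounded open set. -/
def IsBoundedDomain {ι : Type*} [Fintype ι] (Ω : Set (EuclideanSpace ℂ ι)) : Prop :=
  IsOpen Ω ∧ IsConnected Ω ∧ Bornology.IsBounded Ω

/-- The `i`-th block of a vector in `ℂ^{n₁} × ⋯ × ℂ^{n_k}` viewed inside `ℂ^{n₁+⋯+n_k}`. -/
def blockOf {k : ℕ} {n : Fin k → ℕ} (z : EuclideanSpace ℂ ((i : Fin k) × Fin (n i)))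
    (i : Fin k) : EuclideanSpace ℂ (Fin (n i)) := WithLp.toLp 2 (fun j => z ⟨i, j⟩)

/-- The product `Ω₁ × ⋯ × Ω_k` viewed as a subset of `ℂ^{n₁+⋯+n_k}`. -/
def prodDomain {k : ℕ} {n : Fin k → ℕ} (Ω : ∀ i, Set (EuclideanSpace ℂ (Fin (n i)))) :
    Set (EuclideanSpace ℂ ((i : Fin k) × Fin (n i))) :=
  {z | ∀ i, blockOf z i ∈ Ω i}

/-!
If `f` realises the radius `r` at `z` and `ball z R ⊆ Ω`, the Schwarz lemma bounds every
coordinate of `f w` by `α = dist w z / R`. Following `f` by the coordinatewise disc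
automorphism sending `f w` to `0` realises at `w` every radius `s` with `s + α ≤ r (1 - s α)`,
in particular `s = r - 2α`. Hence `T z ≤ T w + 2α`; exchanging `z` and `w` shows that `T` is
locally Lipschitz.
-/

open scoped ComplexConjugate

def diskMobius (a u : ℂ) : ℂ := (u - a) / (1 - conj a * u)

section diskMobius

variable {a u v : ℂ}

lemma one_sub_conj_mul_ne_zero (h : ‖a‖ * ‖u‖ < 1) : 1 - conj a * u ≠ 0 := by
  intro h0
  have := congrArg norm (sub_eq_zero.1 h0).symm
  rw [norm_mul, Complex.norm_conj, norm_one] at this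
  linarith

@[simp]
lemma diskMobius_self (a : ℂ) : diskMobius a a = 0 := by
  simp [diskMobius]

lemma norm_diskMobius_le (h : ‖a‖ * ‖u‖ < 1) :
    ‖diskMobius a u‖ ≤ (‖u‖ + ‖a‖) / (1 - ‖a‖ * ‖u‖) := by
  rw [diskMobius, norm_div]
  refine div_le_div₀ (by positivity) (norm_sub_le u a) (by linarith) ?_
  simpa [norm_mul] using norm_sub_norm_le (1 : ℂ) (conj a * u)

lemma norm_diskMobius_lt_one (ha : ‖a‖ < 1) (hu : ‖u‖ < 1) : ‖diskMobius a u‖ < 1 := by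
  have hden := one_sub_conj_mul_ne_zero (a := a) (u := u) (by nlinarith [norm_nonneg a])
  have key :
      ‖1 - conj a * u‖ ^ 2 - ‖u - a‖ ^ 2 = (1 - ‖a‖ ^ 2) * (1 - ‖u‖ ^ 2) := by
    simp only [Complex.sq_norm, Complex.normSq_apply, Complex.sub_re, Complex.sub_im,
      Complex.mul_re, Complex.mul_im, Complex.one_re, Complex.one_im, Complex.conj_re,
      Complex.conj_im]
    ring
  have hpos : 0 < (1 - ‖a‖ ^ 2) * (1 - ‖u‖ ^ 2) :=
    mul_pos (by nlinarith [norm_nonneg a]) (by nlinarith [norm_nonneg u])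
  have hsq : ‖u - a‖ ^ 2 < ‖1 - conj a * u‖ ^ 2 := by linarith
  rw [diskMobius, norm_div, div_lt_one (norm_pos_iff.2 hden)]
  exact (pow_lt_pow_iff_left₀ (norm_nonneg _) (norm_nonneg _) two_ne_zero).1 hsq

lemma diskMobius_diskMobius_neg (ha : ‖a‖ < 1) (hv : ‖a‖ * ‖v‖ < 1) :
    diskMobius a (diskMobius (-a) v) = v := by
  have hv' : 1 + conj a * v ≠ 0 := by
    simpa using one_sub_conj_mul_ne_zero (a := -a) (by simpa using hv)
  have ha' : 1 - conj a * a ≠ 0 := one_sub_conj_mul_ne_zero (by nlinarith [norm_nonneg a])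
  have hden :
      1 - conj a * ((v + a) / (1 + conj a * v)) = (1 - conj a * a) / (1 + conj a * v) := by
    field_simp
    ring
  have hnum : (v + a) / (1 + conj a * v) - a = v * (1 - conj a * a) / (1 + conj a * v) := by
    rw [eq_div_iff hv', sub_mul, div_mul_cancel₀ _ hv']
    ring
  simp only [diskMobius, map_neg, neg_mul, sub_neg_eq_add]
  rw [hnum, hden, div_div_div_cancel_right₀ hv', mul_div_cancel_right₀ _ ha']

lemma diskMobius_injOn (ha : ‖a‖ < 1) : InjOn (diskMobius a) (ball 0 1) := by
  refine LeftInvOn.injOn (f₁' := diskMobius (-a)) fun u hu => ?_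
  have hu : ‖u‖ < 1 := mem_ball_zero_iff.1 hu
  have hau : ‖-a‖ * ‖u‖ < 1 := by
    rw [norm_neg]
    nlinarith [norm_nonneg a, norm_nonneg u]
  simpa using diskMobius_diskMobius_neg (a := -a) (by rwa [norm_neg]) hau

lemma differentiableOn_diskMobius (ha : ‖a‖ < 1) :
    DifferentiableOn ℂ (diskMobius a) (ball 0 1) := by
  intro u hu
  have hu : ‖u‖ < 1 := mem_ball_zero_iff.1 hu
  have := one_sub_conj_mul_ne_zero (a := a) (u := u) (by nlinarith [norm_nonneg a, norm_nonneg u])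
  unfold diskMobius
  fun_prop (disch := assumption)

end diskMobius

section polydiskMobius

variable {ι : Type*}

def polydiskMobius (a x : EuclideanSpace ℂ ι) : EuclideanSpace ℂ ι :=
  WithLp.toLp 2 fun i => diskMobius (a i) (x i)

@[simp]
lemma polydiskMobius_self (a : EuclideanSpace ℂ ι) : polydiskMobius a a = 0 := by
  ext i
  simp [polydiskMobius]

variable [Fintype ι] {a : EuclideanSpace ℂ ι} (ha : a ∈ polydisk ι 1)
include ha

lemma mapsTo_polydiskMobius : MapsTo (polydiskMobius a) (polydisk ι 1) (polydisk ι 1) :=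
  fun _ hx i => norm_diskMobius_lt_one (ha i) (hx i)

lemma injOn_polydiskMobius : InjOn (polydiskMobius a) (polydisk ι 1) := fun _ hx _ hy hxy =>
  PiLp.ext fun i => diskMobius_injOn (ha i) (mem_ball_zero_iff.2 (hx i))
    (mem_ball_zero_iff.2 (hy i)) (congrArg (· i) hxy)

lemma differentiableOn_polydiskMobius :
    DifferentiableOn ℂ (polydiskMobius a) (polydisk ι 1) := by
  refine (differentiableOn_piLp 2).2 fun i => ?_
  exact (differentiableOn_diskMobius (ha i)).comp
    ((differentiableOn_piLp 2).1 differentiableOn_id i) fun x hx => mem_ball_zero_iff.2 (hx i)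

lemma polydisk_subset_image_polydiskMobius {α r s : ℝ} (haα : ∀ i, ‖a i‖ ≤ α)
    (hsα : s * α < 1) (hrs : s + α ≤ r * (1 - s * α)) :
    polydisk ι s ⊆ polydiskMobius a '' polydisk ι r := by
  intro v hv
  have hav : ∀ i, ‖a i‖ * ‖v i‖ < 1 := fun i => by
    nlinarith [norm_nonneg (a i), norm_nonneg (v i), haα i, hv i]
  refine ⟨WithLp.toLp 2 fun i => diskMobius (-a i) (v i), fun i => ?_, ?_⟩
  · have hα : 0 ≤ α := (norm_nonneg _).trans (haα i)
    have hs : 0 ≤ s := (norm_nonneg _).trans (hv i).le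
    have hr : 0 ≤ r := by
      by_contra! hr
      nlinarith
    have hbound := norm_diskMobius_le (a := -a i) (u := v i) (by simpa using hav i)
    rw [norm_neg] at hbound
    refine hbound.trans_lt ((div_lt_iff₀ (by linarith [hav i])).2 ?_)
    have hprod : ‖a i‖ * ‖v i‖ ≤ s * α := by
      nlinarith [norm_nonneg (a i), norm_nonneg (v i), haα i, hv i]
    nlinarith [mul_le_mul_of_nonneg_left hprod hr, haα i, hv i]
  · ext i
    exact diskMobius_diskMobius_neg (ha i) (hav i)

end polydiskMobius

section squeezing

variable {ι : Type*} [Fintype ι] {Ω : Set (EuclideanSpace ℂ ι)} {z w : EuclideanSpace ℂ ι}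
  {R r s : ℝ}

def squeezingRadii (Ω : Set (EuclideanSpace ℂ ι)) (z : EuclideanSpace ℂ ι) : Set ℝ :=
  {r : ℝ | 0 < r ∧ ∃ f : EuclideanSpace ℂ ι → EuclideanSpace ℂ ι,
    DifferentiableOn ℂ f Ω ∧ Set.InjOn f Ω ∧ f '' Ω ⊆ polydisk ι 1 ∧
    f z = 0 ∧ polydisk ι r ⊆ f '' Ω}

lemma squeezingT_eq_sSup (Ω : Set (EuclideanSpace ℂ ι)) (z : EuclideanSpace ℂ ι) :
    squeezingT Ω z = sSup (squeezingRadii Ω z) := rfl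

lemma squeezingT_nonneg (Ω : Set (EuclideanSpace ℂ ι)) (z : EuclideanSpace ℂ ι) :
    0 ≤ squeezingT Ω z := by
  rw [squeezingT_eq_sSup]
  exact Real.sSup_nonneg fun _ hr => hr.1.le

lemma le_one_of_mem_squeezingRadii [Nonempty ι] (hr : r ∈ squeezingRadii Ω z) : r ≤ 1 := by
  obtain ⟨-, f, -, -, hmaps, -, hcover⟩ := hr
  by_contra! h
  have hone : (WithLp.toLp 2 fun _ => (1 : ℂ) : EuclideanSpace ℂ ι) ∈ polydisk ι r :=
    fun _ => by simpa using h
  simpa using hmaps (hcover hone) (Classical.arbitrary ι)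

lemma le_squeezingT [Nonempty ι] (hr : r ∈ squeezingRadii Ω z) : r ≤ squeezingT Ω z := by
  rw [squeezingT_eq_sSup]
  exact le_csSup ⟨1, fun _ => le_one_of_mem_squeezingRadii⟩ hr

lemma norm_apply_le_div_of_mapsTo_polydisk {E : Type*} [NormedAddCommGroup E] [NormedSpace ℂ E]
    {f : E → EuclideanSpace ℂ ι} {z w : E} (hf : DifferentiableOn ℂ f (ball z R))
    (hmaps : MapsTo f (ball z R) (polydisk ι 1)) (hfz : f z = 0) (hw : w ∈ ball z R) (i : ι) :
    ‖f w i‖ ≤ dist w z / R := by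
  have hfi : DifferentiableOn ℂ (fun x => f x i) (ball z R) := (differentiableOn_piLp 2).1 hf i
  have hmaps_i : MapsTo (fun x => f x i) (ball z R) (closedBall (f z i) 1) := fun x hx => by
    simpa [hfz] using (hmaps hx i).le
  simpa [hfz, div_eq_inv_mul] using Complex.dist_le_div_mul_dist_of_mapsTo_ball hfi hmaps_i hw

lemma mem_squeezingRadii_of_mem_ball (hball : ball z R ⊆ Ω) (hw : w ∈ ball z R)
    (hr : r ∈ squeezingRadii Ω z) (hs : 0 < s) (hsα : s * (dist w z / R) < 1)
    (hrs : s + dist w z / R ≤ r * (1 - s * (dist w z / R))) : s ∈ squeezingRadii Ω w := by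
  obtain ⟨-, f, hf, hinj, hmaps, hfz, hcover⟩ := hr
  have hmaps' : MapsTo f Ω (polydisk ι 1) := mapsTo_iff_image_subset.2 hmaps
  have hfw : f w ∈ polydisk ι 1 := hmaps' (hball hw)
  refine ⟨hs, polydiskMobius (f w) ∘ f, ?_, ?_, ?_, polydiskMobius_self _, ?_⟩
  · exact (differentiableOn_polydiskMobius hfw).comp hf hmaps'
  · exact (injOn_polydiskMobius hfw).comp hinj hmaps'
  · rw [image_comp]
    exact (image_mono hmaps).trans (mapsTo_polydiskMobius hfw).image_subset
  · rw [image_comp]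
    refine (polydisk_subset_image_polydiskMobius hfw (fun i => ?_) hsα hrs).trans
      (image_mono hcover)
    exact norm_apply_le_div_of_mapsTo_polydisk (hf.mono hball) (hmaps'.mono_left hball) hfz hw i

lemma squeezingT_le_add [Nonempty ι] (hball : ball z R ⊆ Ω) (hw : w ∈ ball z R) :
    squeezingT Ω z ≤ squeezingT Ω w + 2 * (dist w z / R) := by
  have hR : 0 < R := nonempty_ball.1 ⟨w, hw⟩
  set α := dist w z / R
  have hα : 0 ≤ α := by positivity
  have hα1 : α < 1 := (div_lt_one hR).2 hw
  -- `Real.sSup_le` also covers an empty set of radii, where `squeezingT` takes the value `0`.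
  rw [squeezingT_eq_sSup Ω z]
  refine Real.sSup_le (fun r hr => ?_) (by linarith [squeezingT_nonneg Ω w])
  rcases le_or_gt (r - 2 * α) 0 with hs | hs
  · linarith [squeezingT_nonneg Ω w]
  · have hr1 := le_one_of_mem_squeezingRadii hr
    have hprod : r * (r - 2 * α) ≤ 1 := by nlinarith
    have hsα : (r - 2 * α) * α < 1 := by nlinarith
    have hrs : r - 2 * α + α ≤ r * (1 - (r - 2 * α) * α) := by
      nlinarith [mul_le_mul_of_nonneg_right hprod hα]
    linarith [le_squeezingT (mem_squeezingRadii_of_mem_ball hball hw hr hs hsα hrs)]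

lemma dist_squeezingT_le [Nonempty ι] (hball : ball z R ⊆ Ω) (hw : dist w z < R / 2) :
    dist (squeezingT Ω w) (squeezingT Ω z) ≤ 4 / R * dist w z := by
  have hR : 0 < R := by linarith [dist_nonneg (x := w) (y := z)]
  have hball' : ball w (R / 2) ⊆ Ω := (ball_subset_ball' (by linarith)).trans hball
  have hzw := squeezingT_le_add hball (mem_ball.2 (by linarith) : w ∈ ball z R)
  have hwz := squeezingT_le_add hball' (mem_ball'.2 hw)
  rw [dist_comm z w] at hwz
  have hd : 0 ≤ dist w z / R := by positivity
  have hhalf : dist w z / (R / 2) = 2 * (dist w z / R) := by ring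
  rw [Real.dist_eq, abs_le, show 4 / R * dist w z = 4 * (dist w z / R) by ring]
  constructor <;> linarith

end squeezing

/-- For any bounded domain `Ω ⊆ ℂⁿ`, the squeezing function corresponding to the polydisk
`T_Ω` is continuous on `Ω`. -/
theorem squeezingT_continuousOn (n : ℕ) (hn : 0 < n)
    (Ω : Set (EuclideanSpace ℂ (Fin n))) (hΩ : IsBoundedDomain Ω) :
    ContinuousOn (squeezingT Ω) Ω := by
  have : Nonempty (Fin n) := ⟨⟨0, hn⟩⟩
  refine continuousOn_of_forall_continuousAt fun z hz => ?_
  obtain ⟨R, hR, hball⟩ := Metric.isOpen_iff.1 hΩ.1 z hz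
  exact continuousAt_of_locally_lipschitz (half_pos hR) (4 / R) fun w hw =>
    dist_squeezingT_le hball hw
end
end

section
/- Let Ω₁,…,Ω_k with Ω_i ⊆ ℂ^{n_i} be bounded domains, each of which is holomorphic homogeneous regular, i.e., for each i there is c_i > 0 with T_{Ω_i}(z) ≥ c_i for all z ∈ Ω_i. Then the product Ω = Ω₁ × Ω₂ × ⋯ × Ω_k ⊆ ℂⁿ, n = n₁ + ⋯ + n_k, is holomorphic homogeneous regular: there is c > 0 with T_Ω(a) ≥ c for all a ∈ Ω. -/
/-!
Choose, at each block `aᵢ` of the point `a`, a squeezing map `fᵢ : Ωᵢ → 𝔻^{nᵢ}` with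
`fᵢ(aᵢ) = 0` whose image contains the polydisk of a common radius `C` below every lower
bound `cᵢ`. The blockwise map `(f₁, …, f_k)` is then a squeezing map of the product whose
image contains `𝔻ⁿ(0, C)`, because a polydisk is the product of the polydisks of its blocks.
Hence `T_Ω ≥ C` on the product.
-/

open Metric Set Matrix
open scoped ComplexOrder

noncomputable section

open Filter Topology

namespace Squeezing

variable {ι : Type*} [Fintype ι]

def IsPolydiskSqueezing (Ω : Set (EuclideanSpace ℂ ι)) (z : EuclideanSpace ℂ ι) (r : ℝ)
    (f : EuclideanSpace ℂ ι → EuclideanSpace ℂ ι) : Prop :=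
  DifferentiableOn ℂ f Ω ∧ InjOn f Ω ∧ f '' Ω ⊆ polydisk ι 1 ∧ f z = 0 ∧
    polydisk ι r ⊆ f '' Ω

theorem squeezingT_def (Ω : Set (EuclideanSpace ℂ ι)) (z : EuclideanSpace ℂ ι) :
    squeezingT Ω z = sSup {r | 0 < r ∧ ∃ f, IsPolydiskSqueezing Ω z r f} :=
  rfl

theorem polydisk_mono {r s : ℝ} (h : r ≤ s) : polydisk ι r ⊆ polydisk ι s :=
  fun _ hw i => (hw i).trans_le h

theorem bddAbove_squeezing_radii [Nonempty ι] (Ω : Set (EuclideanSpace ℂ ι))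
    (z : EuclideanSpace ℂ ι) : BddAbove {r | 0 < r ∧ ∃ f, IsPolydiskSqueezing Ω z r f} := by
  refine ⟨1, ?_⟩
  rintro r ⟨hr0, f, -, -, hmaps, -, hcover⟩
  by_contra! h1r
  -- the constant vector with entries `(1 + r) / 2` lies in `𝔻(0, r)` but not in `𝔻(0, 1)`
  set s : ℝ := (1 + r) / 2
  have hs : ‖(s : ℂ)‖ = s := by rw [Complex.norm_real, Real.norm_of_nonneg (by positivity)]
  have hw : (WithLp.toLp 2 fun _ => (s : ℂ) : EuclideanSpace ℂ ι) ∈ polydisk ι r :=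
    fun _ => by simp only [hs, s]; linarith
  have := hmaps (hcover hw) (Classical.arbitrary ι)
  simp only [hs, s] at this
  linarith

theorem le_squeezingT [Nonempty ι] {Ω : Set (EuclideanSpace ℂ ι)} {z : EuclideanSpace ℂ ι}
    {r : ℝ} {f : EuclideanSpace ℂ ι → EuclideanSpace ℂ ι} (hr : 0 < r)
    (hf : IsPolydiskSqueezing Ω z r f) : r ≤ squeezingT Ω z :=
  le_csSup (bddAbove_squeezing_radii Ω z) ⟨hr, f, hf⟩

theorem exists_isPolydiskSqueezing_of_lt_squeezingT {Ω : Set (EuclideanSpace ℂ ι)}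
    {z : EuclideanSpace ℂ ι} {s : ℝ} (hs : 0 ≤ s) (h : s < squeezingT Ω z) :
    ∃ f, IsPolydiskSqueezing Ω z s f := by
  rw [squeezingT_def] at h
  have hne : {r | 0 < r ∧ ∃ f, IsPolydiskSqueezing Ω z r f}.Nonempty := by
    by_contra! hempty
    rw [hempty, Real.sSup_empty] at h
    linarith
  obtain ⟨r, ⟨-, f, hdiff, hinj, hmaps, hz, hcover⟩, hsr⟩ := exists_lt_of_lt_csSup hne h
  exact ⟨f, hdiff, hinj, hmaps, hz, (polydisk_mono hsr.le).trans hcover⟩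

/-- In `ℂ⁰` every radius is attained, and `sSup` of this unbounded set is the junk value `0`. -/
theorem squeezingT_eq_zero_of_isEmpty [IsEmpty ι] {Ω : Set (EuclideanSpace ℂ ι)}
    {z : EuclideanSpace ℂ ι} (hz : z ∈ Ω) : squeezingT Ω z = 0 := by
  refine Real.sSup_of_not_bddAbove fun ⟨M, hM⟩ => ?_
  have hmem : max M 0 + 1 ∈ {r | 0 < r ∧ ∃ f, IsPolydiskSqueezing Ω z r f} :=
    ⟨by positivity, fun _ => 0, differentiableOn_const 0,
      fun _ _ _ _ _ => Subsingleton.elim _ _, fun _ _ i => isEmptyElim i,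
      Subsingleton.elim _ _, fun _ _ => ⟨z, hz, Subsingleton.elim _ _⟩⟩
  linarith [hM hmem, le_max_left M 0]

theorem nonempty_of_squeezingT_pos {Ω : Set (EuclideanSpace ℂ ι)} {z : EuclideanSpace ℂ ι}
    (hz : z ∈ Ω) (h : 0 < squeezingT Ω z) : Nonempty ι := by
  by_contra! hι
  exact h.ne' (squeezingT_eq_zero_of_isEmpty hz)

section Product

variable {k : ℕ} {n : Fin k → ℕ}

local notation "ℂⁿ" => EuclideanSpace ℂ ((i : Fin k) × Fin (n i))

def ofBlocks (z : ∀ i, EuclideanSpace ℂ (Fin (n i))) : ℂⁿ :=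
  WithLp.toLp 2 fun p => z p.1 p.2

def blockMap (f : ∀ i, EuclideanSpace ℂ (Fin (n i)) → EuclideanSpace ℂ (Fin (n i))) :
    ℂⁿ → ℂⁿ :=
  fun z => ofBlocks fun i => f i (blockOf z i)

theorem ext_blockOf {z w : ℂⁿ} (h : ∀ i, blockOf z i = blockOf w i) : z = w := by
  ext ⟨i, j⟩
  exact congrArg (· j) (h i)

theorem differentiable_blockOf (i : Fin k) : Differentiable ℂ fun z : ℂⁿ => blockOf z i :=
  differentiable_euclidean.2 fun j =>
    (EuclideanSpace.proj (𝕜 := ℂ) (⟨i, j⟩ : (i : Fin k) × Fin (n i))).differentiable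

theorem mem_polydisk_iff_blockOf {r : ℝ} {w : ℂⁿ} :
    w ∈ polydisk _ r ↔ ∀ i, blockOf w i ∈ polydisk _ r :=
  ⟨fun hw i j => hw ⟨i, j⟩, fun hw p => hw p.1 p.2⟩

theorem IsPolydiskSqueezing.blockMap {Ω : ∀ i, Set (EuclideanSpace ℂ (Fin (n i)))} {a : ℂⁿ}
    {r : ℝ} {f : ∀ i, EuclideanSpace ℂ (Fin (n i)) → EuclideanSpace ℂ (Fin (n i))}
    (hf : ∀ i, IsPolydiskSqueezing (Ω i) (blockOf a i) r (f i)) :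
    IsPolydiskSqueezing (prodDomain Ω) a r (blockMap f) := by
  choose hdiff hinj hmaps hzero hcover using hf
  refine ⟨?_, ?_, ?_, ?_, ?_⟩
  · refine differentiableOn_euclidean.2 ?_
    rintro ⟨i, j⟩
    exact (differentiableOn_euclidean.1 (hdiff i) j).comp
      (differentiable_blockOf i).differentiableOn fun z hz => hz i
  · intro z hz w hw hzw
    exact ext_blockOf fun i => hinj i (hz i) (hw i) (congrArg (blockOf · i) hzw)
  · rintro _ ⟨z, hz, rfl⟩
    exact mem_polydisk_iff_blockOf.2 fun i => hmaps i ⟨_, hz i, rfl⟩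
  · exact ext_blockOf fun i => hzero i
  · intro w hw
    choose z hz hfz using fun i => hcover i (mem_polydisk_iff_blockOf.1 hw i)
    exact ⟨ofBlocks z, hz, ext_blockOf hfz⟩

end Product

end Squeezing

open Squeezing in
theorem product_holomorphic_homogeneous_regular_general (k : ℕ) (hk : 0 < k) (n : Fin k → ℕ)
    (Ω : ∀ i, Set (EuclideanSpace ℂ (Fin (n i))))
    (hbdd : ∀ i, ∃ c : ℝ, 0 < c ∧ ∀ z ∈ Ω i, c ≤ squeezingT (Ω i) z) :
    ∃ c : ℝ, 0 < c ∧ ∀ a ∈ prodDomain Ω, c ≤ squeezingT (prodDomain Ω) a := by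
  choose c hc hcT using hbdd
  obtain ⟨C, hCc, hC0⟩ : ∃ C, (∀ i, C < c i) ∧ 0 < C :=
    ((eventually_all.2 fun i => (eventually_lt_nhds (hc i)).filter_mono nhdsWithin_le_nhds).and
      self_mem_nhdsWithin).exists (f := 𝓝[>] (0 : ℝ))
  refine ⟨C, hC0, fun a ha => ?_⟩
  have hCT : ∀ i, C < squeezingT (Ω i) (blockOf a i) := fun i =>
    (hCc i).trans_le (hcT i _ (ha i))
  have hn : ∀ i, Nonempty (Fin (n i)) := fun i =>
    nonempty_of_squeezingT_pos (ha i) (hC0.trans (hCT i))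
  have : Nonempty ((i : Fin k) × Fin (n i)) := nonempty_sigma.2 ⟨⟨0, hk⟩, hn _⟩
  choose f hf using fun i => exists_isPolydiskSqueezing_of_lt_squeezingT hC0.le (hCT i)
  exact le_squeezingT hC0 (IsPolydiskSqueezing.blockMap hf)

/-- A product of holomorphic homogeneous regular domains is holomorphic homogeneous
regular: if each `T_{Ωᵢ}` has a positive lower bound, then so does `T_Ω` on the product. -/
theorem product_holomorphic_homogeneous_regular (k : ℕ) (hk : 0 < k) (n : Fin k → ℕ)
    (Ω : ∀ i, Set (EuclideanSpace ℂ (Fin (n i)))) (hΩ : ∀ i, IsBoundedDomain (Ω i))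
    (hbdd : ∀ i, ∃ c : ℝ, 0 < c ∧ ∀ z ∈ Ω i, c ≤ squeezingT (Ω i) z) :
    ∃ c : ℝ, 0 < c ∧ ∀ a ∈ prodDomain Ω, c ≤ squeezingT (prodDomain Ω) a :=
  product_holomorphic_homogeneous_regular_general k hk n Ω hbdd
end
end
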